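/- arXiv:1408.1342 — 8 statements merged into one kernel-verified Lean document; each statement's English description precedes it below -/
import Mathlib

section
/- Let x : P → X, φ : P → Z, f : X → Y, y : Z → Y be functions with f ∘ x = y ∘ φ, where x and y are surjective. Assume (i) the kernel relations of x and φ permute: Ker x ∘ Ker φ = Ker φ ∘ Ker x (as relations on P), and (ii) the image of Ker x under φ is Ker y, i.e. for all z, z' ∈ Z, y z = y z' if and only if there exist p, p' ∈ P with φ p = z, φ p' = z' and x p = x p'. Then for every z ∈ Z and a ∈ X with y z = f a there exists p ∈ P with φ p = z and x p = a. -/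
/-- Composition of relations: `RelComp S R` relates `a` to `c` iff there is `b`
with `R a b` and `S b c` (so `R` is applied first, `S` last). -/
def RelComp {α β γ : Type*} (S : β → γ → Prop) (R : α → β → Prop) : α → γ → Prop :=
  fun a c => ∃ b, R a b ∧ S b c

/-- The kernel relation of a function `g`. -/
def Ker {α β : Type*} (g : α → β) : α → α → Prop := fun p p' => g p = g p'

/-- The computational core (the identity `φ x° = y° f`) of the proof of Proposition 4.1. -/
theorem stmt_2 {P X Z Y : Type*} (x : P → X) (φ : P → Z) (f : X → Y) (y : Z → Y)
    (hcomm : f ∘ x = y ∘ φ)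
    (hx : Function.Surjective x) (hy : Function.Surjective y)
    (hperm : RelComp (Ker x) (Ker φ) = RelComp (Ker φ) (Ker x))
    (himg : ∀ z z', y z = y z' ↔ ∃ p p', φ p = z ∧ φ p' = z' ∧ x p = x p') :
    ∀ z a, y z = f a → ∃ p, φ p = z ∧ x p = a := by
  intro z a hza
  obtain ⟨q, hq⟩ := hx a
  have hyq : y z = y (φ q) := by
    rw [hza, ← hq]
    exact congrFun hcomm q
  obtain ⟨p, p', hpz, hpq, hxpp⟩ := (himg z (φ q)).mp hyq
  have h1 : RelComp (Ker φ) (Ker x) p q := ⟨p', hxpp, hpq⟩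
  have h2 : RelComp (Ker x) (Ker φ) p q := by rw [hperm]; exact h1
  obtain ⟨b, hb1, hb2⟩ := h2
  exact ⟨b, by rw [← hb1, hpz], by rw [hb2, hq]⟩
end

section
/- Let P, X, U, Z, Y, V be groups with group homomorphisms x : P → X, u : X → U, φ : P → Z, f : X → Y, y : Z → Y, v : Y → V, w : U → V and homomorphic sections σ : Z → P, s : Y → X satisfying f ∘ x = y ∘ φ, w ∘ u = v ∘ f, φ ∘ σ = id, f ∘ s = id, x ∘ σ = s ∘ y, with x and y surjective. If the outer rectangle is a pullback, i.e. p ↦ (φ p, u (x p)) is a bijection from P onto {(z, c) ∈ Z × U | v (y z) = w c}, then both inner squares are pullbacks: p ↦ (φ p, x p) is a bijection from P onto {(z, a) ∈ Z × X | y z = f a}, and a ↦ (f a, u a) is a bijection from X onto {(b, c) ∈ Y × U | v b = w c}. -/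
/-- A commutative square (with sides `φ, x` out of `P` and `y, f` into `Y`) is a pullback:
`p ↦ (φ p, x p)` is a bijection from `P` onto `{(z, a) ∈ Z × X | y z = f a}`. -/
def IsPB {P Z X Y : Type*} (φ : P → Z) (x : P → X) (y : Z → Y) (f : X → Y) : Prop :=
  Set.BijOn (fun p => (φ p, x p)) Set.univ {za : Z × X | y za.1 = f za.2}

/-- Proposition 4.1 instantiated in the category of groups: if the outer rectangle is a
pullback and the left square has homomorphic split epimorphisms vertically and surjective
homomorphisms horizontally, then both squares are pullbacks. -/
theorem stmt_4 {P X U Z Y V : Type*}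
    [Group P] [Group X] [Group U] [Group Z] [Group Y] [Group V]
    (x : P →* X) (u : X →* U) (φ : P →* Z) (f : X →* Y) (y : Z →* Y) (v : Y →* V)
    (w : U →* V) (σ : Z →* P) (s : Y →* X)
    (h1 : f.comp x = y.comp φ) (h2 : w.comp u = v.comp f)
    (h3 : φ.comp σ = MonoidHom.id Z) (h4 : f.comp s = MonoidHom.id Y)
    (h5 : x.comp σ = s.comp y)
    (hx : Function.Surjective x) (hy : Function.Surjective y)
    (houter : IsPB (⇑φ) (⇑u ∘ ⇑x) (⇑v ∘ ⇑y) (⇑w)) :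
    IsPB (⇑φ) (⇑x) (⇑y) (⇑f) ∧ IsPB (⇑f) (⇑u) (⇑v) (⇑w) := by
  obtain ⟨-, hinj, hsurj⟩ := houter
  have hfx : ∀ p, f (x p) = y (φ p) := fun p => DFunLike.congr_fun h1 p
  have hwu : ∀ a, w (u a) = v (f a) := fun a => DFunLike.congr_fun h2 a
  have hφσ : ∀ z, φ (σ z) = z := fun z => DFunLike.congr_fun h3 z
  have hfs : ∀ b, f (s b) = b := fun b => DFunLike.congr_fun h4 b
  have hxσ : ∀ z, x (σ z) = s (y z) := fun z => DFunLike.congr_fun h5 z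
  -- right square injectivity
  have rinj : ∀ a a', f a = f a' → u a = u a' → a = a' := by
    intro a a' hf hu
    obtain ⟨p, rfl⟩ := hx a
    obtain ⟨p', rfl⟩ := hx a'
    set p'' := p' * (σ (φ p'))⁻¹ * σ (φ p) with hp''
    have hxp'' : x p'' = x p' := by
      simp only [hp'', map_mul, map_inv, hxσ]
      rw [← hfx, ← hfx, hf]
      group
    have : p'' = p := by
      refine hinj (Set.mem_univ p'') (Set.mem_univ p) ?_
      simp only [Function.comp_apply, Prod.mk.injEq]
      constructor
      · simp [hp'', hφσ]
      · rw [hxp'', hu]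
    rw [← this, hxp'']
  constructor
  · refine ⟨fun p _ => ?_, fun p _ p' _ h => ?_, fun za hza => ?_⟩
    · exact (hfx p).symm
    · simp only [Prod.mk.injEq] at h
      refine hinj (Set.mem_univ p) (Set.mem_univ p') ?_
      simp only [Function.comp_apply, Prod.mk.injEq]
      exact ⟨h.1, by rw [h.2]⟩
    · obtain ⟨z, a⟩ := za
      have hza' : y z = f a := hza
      have : (z, u a) ∈ {zc : Z × U | (⇑v ∘ ⇑y) zc.1 = w zc.2} := by
        simp only [Set.mem_setOf_eq, Function.comp_apply, hza', hwu]
      obtain ⟨p, -, hp⟩ := hsurj this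
      simp only [Function.comp_apply, Prod.mk.injEq] at hp
      refine ⟨p, Set.mem_univ p, ?_⟩
      have hxa : x p = a := by
        refine rinj _ _ ?_ hp.2
        rw [hfx, hp.1, hza']
      simp [hp.1, hxa]
  · refine ⟨fun a _ => ?_, fun a _ a' _ h => ?_, fun bc hbc => ?_⟩
    · exact (hwu a).symm
    · simp only [Prod.mk.injEq] at h
      exact rinj a a' h.1 h.2
    · obtain ⟨b, c⟩ := bc
      have hbc' : v b = w c := hbc
      obtain ⟨z, rfl⟩ := hy b
      have : (z, c) ∈ {zc : Z × U | (⇑v ∘ ⇑y) zc.1 = w zc.2} := hbc'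
      obtain ⟨p, -, hp⟩ := hsurj this
      simp only [Function.comp_apply, Prod.mk.injEq] at hp
      refine ⟨x p, Set.mem_univ _, ?_⟩
      simp [hfx, hp.1, hp.2]
end

section
/- Let x : P → X be a surjective function and φ : P → Z any function such that Ker x ∘ Ker φ = Ker φ ∘ Ker x as relations on P. Define the relation R on X by: R a a' iff there exist p, p' ∈ P with x p = a, x p' = a' and φ p = φ p' (i.e. R is the image of Ker φ under x). Then R is an equivalence relation on X; equivalently, R satisfies R ∘ R = R. -/
/-- The transitivity computation `R R = R` at the heart of the proof of Proposition 4.2: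
the image `R = x(Ker φ)` of `Ker φ` along a surjection `x` is an equivalence relation,
equivalently `R ∘ R = R`, provided `Ker x` and `Ker φ` permute. -/
theorem stmt_5 {P X Z : Type*} (x : P → X) (φ : P → Z)
    (hx : Function.Surjective x)
    (hperm : RelComp (Ker x) (Ker φ) = RelComp (Ker φ) (Ker x)) :
    ∀ R : X → X → Prop,
      (∀ a a', R a a' ↔ ∃ p p', x p = a ∧ x p' = a' ∧ φ p = φ p') →
      Equivalence R ∧ RelComp R R = R := by
  intro R hR
  have htrans : ∀ a b c, R a b → R b c → R a c := by
    intro a b c hab hbc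
    obtain ⟨p, p', hpa, hpb, hφ⟩ := (hR a b).mp hab
    obtain ⟨q, q', hqb, hqc, hφ'⟩ := (hR b c).mp hbc
    have h1 : RelComp (Ker x) (Ker φ) p q := ⟨p', hφ, by simp [Ker, hpb, hqb]⟩
    rw [hperm] at h1
    obtain ⟨m, hxm, hφm⟩ := h1
    exact (hR a c).mpr ⟨m, q', by rw [← hxm, hpa], hqc, by rw [Ker] at hφm; rw [hφm, hφ']⟩
  have hrefl : ∀ a, R a a := by
    intro a
    obtain ⟨p, hp⟩ := hx a
    exact (hR a a).mpr ⟨p, p, hp, hp, rfl⟩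
  have hsymm : ∀ a b, R a b → R b a := by
    intro a b hab
    obtain ⟨p, p', h1, h2, h3⟩ := (hR a b).mp hab
    exact (hR b a).mpr ⟨p', p, h2, h1, h3.symm⟩
  refine ⟨⟨hrefl, fun h => hsymm _ _ h, fun h h' => htrans _ _ _ h h'⟩, ?_⟩
  funext a c
  ext
  constructor
  · rintro ⟨b, hab, hbc⟩; exact htrans a b c hab hbc
  · intro h; exact ⟨a, hrefl a, h⟩
end

section
/- Consider a commutative cube of groups and group homomorphisms with top face P → X (x), P → A (a), X → U (u), A → U (c), bottom face Z → Y (y), Z → B (b), Y → V (v), B → V (e), and vertical homomorphisms φ : P → Z, f : X → Y, g : A → B, w : U → V, all faces commuting. Assume all eight horizontal homomorphisms x, a, u, c, y, b, v, e are surjective and the four vertical homomorphisms are split epimorphisms with homomorphic sections σ : Z → P, s : Y → X, t : B → A, i : V → U satisfying x ∘ σ = s ∘ y, a ∘ σ = t ∘ b, u ∘ s = i ∘ v, c ∘ t = i ∘ e. Assume the left face (square a, φ, g, b) and the back face (square x, φ, f, y) are pullbacks (the induced maps into the set-theoretic pullbacks are bijections), and the top and bottom faces are right saturated: the induced map {(p,p')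 ∈ P × P | a p = a p'} → {(q,q') ∈ X × X | u q = u q'}, (p,p') ↦ (x p, x p'), is surjective, and likewise the induced map from the kernel pair of b to the kernel pair of v given by y is surjective. Then the front face (square c, g, w, e) and the right face (square u, f, w, v) are pullbacks. -/
/-- Proposition 5.1 instantiated in the category of groups: in a commutative cube of
vertical split epimorphisms and horizontal surjective homomorphisms, if the left and back
faces are pullbacks and the top and bottom faces are right saturated, then the front and
right faces are pullbacks. -/
theorem stmt_9 {P X U A Z Y V B : Type*}
    [Group P] [Group X] [Group U] [Group A] [Group Z] [Group Y] [Group V] [Group B]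
    -- top face
    (x : P →* X) (a : P →* A) (u : X →* U) (c : A →* U)
    -- bottom face
    (y : Z →* Y) (b : Z →* B) (v : Y →* V) (e : B →* V)
    -- vertical homomorphisms
    (φ : P →* Z) (f : X →* Y) (g : A →* B) (w : U →* V)
    -- homomorphic sections of the vertical homomorphisms
    (σ : Z →* P) (s : Y →* X) (t : B →* A) (i : V →* U)
    -- commutativity of all faces
    (htop : u.comp x = c.comp a) (hbot : v.comp y = e.comp b)
    (hback : f.comp x = y.comp φ) (hleft : g.comp a = b.comp φ)
    (hright : w.comp u = v.comp f) (hfront : w.comp c = e.comp g)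
    -- the vertical homomorphisms are split epimorphisms
    (hφσ : φ.comp σ = MonoidHom.id Z) (hfs : f.comp s = MonoidHom.id Y)
    (hgt : g.comp t = MonoidHom.id B) (hwi : w.comp i = MonoidHom.id V)
    -- compatibility of the sections
    (hxσ : x.comp σ = s.comp y) (haσ : a.comp σ = t.comp b)
    (hus : u.comp s = i.comp v) (hct : c.comp t = i.comp e)
    -- all horizontal homomorphisms are surjective
    (hx : Function.Surjective x) (ha : Function.Surjective a)
    (hu : Function.Surjective u) (hc : Function.Surjective c)
    (hy : Function.Surjective y) (hb : Function.Surjective b)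
    (hv : Function.Surjective v) (he : Function.Surjective e)
    -- left and back faces are pullbacks
    (hleftPB : IsPB (⇑φ) (⇑a) (⇑b) (⇑g)) (hbackPB : IsPB (⇑φ) (⇑x) (⇑y) (⇑f))
    -- top and bottom faces are right saturated
    (htopSat : ∀ q q' : X, u q = u q' → ∃ p p' : P, a p = a p' ∧ x p = q ∧ x p' = q')
    (hbotSat : ∀ r r' : Y, v r = v r' → ∃ z z' : Z, b z = b z' ∧ y z = r ∧ y z' = r') :
    IsPB (⇑g) (⇑c) (⇑e) (⇑w) ∧ IsPB (⇑f) (⇑u) (⇑v) (⇑w) := by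
  -- pointwise commutativity
  have Htop : ∀ p, u (x p) = c (a p) := fun p => DFunLike.congr_fun htop p
  have Hback : ∀ p, f (x p) = y (φ p) := fun p => DFunLike.congr_fun hback p
  have Hleft : ∀ p, g (a p) = b (φ p) := fun p => DFunLike.congr_fun hleft p
  have Hright : ∀ q, w (u q) = v (f q) := fun q => DFunLike.congr_fun hright q
  have Hfront : ∀ α, w (c α) = e (g α) := fun α => DFunLike.congr_fun hfront α
  have Hφσ : ∀ z, φ (σ z) = z := fun z => DFunLike.congr_fun hφσ z
  have Hgt : ∀ β, g (t β) = β := fun β => DFunLike.congr_fun hgt β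
  have Hwi : ∀ n, w (i n) = n := fun n => DFunLike.congr_fun hwi n
  have Hxσ : ∀ z, x (σ z) = s (y z) := fun z => DFunLike.congr_fun hxσ z
  have Haσ : ∀ z, a (σ z) = t (b z) := fun z => DFunLike.congr_fun haσ z
  have Hct : ∀ β, c (t β) = i (e β) := fun β => DFunLike.congr_fun hct β
  -- back face: injectivity and surjectivity, in elementwise form
  have back_inj : ∀ p : P, φ p = 1 → x p = 1 → p = 1 := by
    intro p h1 h2
    exact hbackPB.injOn (Set.mem_univ p) (Set.mem_univ (1 : P)) (by simp [h1, h2])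
  have back_surj : ∀ (z : Z) (q : X), y z = f q → ∃ p : P, φ p = z ∧ x p = q := by
    intro z q h
    obtain ⟨p, -, hp⟩ := hbackPB.surjOn (show (z, q) ∈ {za : Z × X | y za.1 = f za.2} from h)
    exact ⟨p, congrArg Prod.fst hp, congrArg Prod.snd hp⟩
  have left_inj : ∀ p : P, φ p = 1 → a p = 1 → p = 1 := by
    intro p h1 h2
    exact hleftPB.injOn (Set.mem_univ p) (Set.mem_univ (1 : P)) (by simp [h1, h2])
  have left_surj : ∀ (z : Z) (α : A), b z = g α → ∃ p : P, φ p = z ∧ a p = α := by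
    intro z α h
    obtain ⟨p, -, hp⟩ := hleftPB.surjOn (show (z, α) ∈ {za : Z × A | b za.1 = g za.2} from h)
    exact ⟨p, congrArg Prod.fst hp, congrArg Prod.snd hp⟩
  -- kernels
  have kerf : ∀ q : X, f q = 1 → ∃ p : P, φ p = 1 ∧ x p = q := fun q h =>
    back_surj 1 q (by simp [h])
  have kerg : ∀ α : A, g α = 1 → ∃ p : P, φ p = 1 ∧ a p = α := fun α h =>
    left_surj 1 α (by simp [h])
  have keru : ∀ q : X, u q = 1 → ∃ m : P, a m = 1 ∧ x m = q := by
    intro q h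
    obtain ⟨p, p', hpa, hpx, hpx'⟩ := htopSat q 1 (by simp [h])
    exact ⟨p * p'⁻¹, by simp [hpa], by simp [hpx, hpx']⟩
  have kerv : ∀ r : Y, v r = 1 → ∃ z : Z, b z = 1 ∧ y z = r := by
    intro r h
    obtain ⟨z, z', hzb, hzy, hzy'⟩ := hbotSat r 1 (by simp [h])
    exact ⟨z * z'⁻¹, by simp [hzb], by simp [hzy, hzy']⟩
  -- key injectivity fact: ker f ∩ ker u = 1
  have kerfu : ∀ q : X, f q = 1 → u q = 1 → q = 1 := by
    intro q hf hu'
    obtain ⟨p, hpφ, hpx⟩ := kerf q hf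
    obtain ⟨m, hma, hmx⟩ := keru q hu'
    have hkx : x (p⁻¹ * m) = 1 := by simp [hpx, hmx]
    have hkφ : φ (p⁻¹ * m) = φ m := by simp [hpφ]
    have hbz : b (φ m) = 1 := by rw [← Hleft, hma, map_one]
    have hyz : y (φ m) = 1 := by rw [← hkφ, ← Hback, hkx, map_one]
    have hm : m = σ (φ m) := by
      have h1 : φ (m * (σ (φ m))⁻¹) = 1 := by simp [Hφσ]
      have h2 : a (m * (σ (φ m))⁻¹) = 1 := by simp [hma, Haσ, hbz]
      exact mul_inv_eq_one.mp (left_inj _ h1 h2)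
    have hk : p⁻¹ * m = σ (φ m) := by
      have h1 : φ ((p⁻¹ * m) * (σ (φ m))⁻¹) = 1 := by
        rw [map_mul, hkφ, map_inv, Hφσ, mul_inv_cancel]
      have h2 : x ((p⁻¹ * m) * (σ (φ m))⁻¹) = 1 := by
        rw [map_mul, hkx, map_inv, Hxσ, hyz, map_one, inv_one, one_mul]
      exact mul_inv_eq_one.mp (back_inj _ h1 h2)
    have hp1 : p = 1 := by
      have h3 : p⁻¹ * m = 1 * m := by rw [hk, ← hm, one_mul]
      have h4 : p⁻¹ = (1 : P) := mul_right_cancel h3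
      simpa using congrArg (·⁻¹) h4
    rw [← hpx, hp1, map_one]
  -- front injectivity fact: ker g ∩ ker c = 1
  have kergc : ∀ α : A, g α = 1 → c α = 1 → α = 1 := by
    intro α hg hc'
    obtain ⟨p, hpφ, hpa⟩ := kerg α hg
    have hq1 : f (x p) = 1 := by rw [Hback, hpφ, map_one]
    have hq2 : u (x p) = 1 := by rw [Htop, hpa, hc']
    have := back_inj p hpφ (kerfu _ hq1 hq2)
    rw [← hpa, this, map_one]
  -- ker v ⊆ f(ker u)
  have kervf : ∀ r : Y, v r = 1 → ∃ q : X, u q = 1 ∧ f q = r := by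
    intro r h
    obtain ⟨z, hzb, hzy⟩ := kerv r h
    obtain ⟨p, hpφ, hpa⟩ := left_surj z 1 (by simp [hzb])
    exact ⟨x p, by rw [Htop, hpa, map_one], by rw [Hback, hpφ, hzy]⟩
  -- right face surjectivity
  have rsurj : ∀ (r : Y) (n : U), v r = w n → ∃ q : X, f q = r ∧ u q = n := by
    intro r n h
    obtain ⟨q0, hq0⟩ := hu n
    have : v (r * (f q0)⁻¹) = 1 := by
      rw [map_mul, map_inv, ← Hright, hq0, ← h, mul_inv_cancel]
    obtain ⟨k, hku, hkf⟩ := kervf _ this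
    refine ⟨k * q0, ?_, ?_⟩
    · rw [map_mul, hkf, inv_mul_cancel_right]
    · rw [map_mul, hku, one_mul, hq0]
  -- ker w ⊆ c(ker g)
  have kerwc : ∀ n : U, w n = 1 → ∃ α : A, g α = 1 ∧ c α = n := by
    intro n h
    obtain ⟨q, hq⟩ := hu n
    have hv1 : v (f q) = 1 := by rw [← Hright, hq, h]
    obtain ⟨k, hku, hkf⟩ := kervf _ hv1
    have : f (q * k⁻¹) = 1 := by rw [map_mul, map_inv, hkf, mul_inv_cancel]
    obtain ⟨p, hpφ, hpx⟩ := kerf _ this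
    refine ⟨a p, by rw [Hleft, hpφ, map_one], ?_⟩
    have : x p * k = q := by rw [hpx, inv_mul_cancel_right]
    calc c (a p) = u (x p) * u k := by rw [← Htop, hku, mul_one]
    _ = u q := by rw [← map_mul, this]
    _ = n := hq
  -- front face surjectivity
  have fsurj : ∀ (β : B) (n : U), e β = w n → ∃ α : A, g α = β ∧ c α = n := by
    intro β n h
    have : w (n * (c (t β))⁻¹) = 1 := by
      rw [map_mul, map_inv, Hct, Hwi, ← h, h, mul_inv_cancel]
    obtain ⟨α0, hα0g, hα0c⟩ := kerwc _ this
    refine ⟨α0 * t β, by rw [map_mul, hα0g, one_mul, Hgt], ?_⟩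
    rw [map_mul, hα0c, inv_mul_cancel_right]
  constructor
  · refine ⟨fun α _ => (Hfront α).symm, ?_, ?_⟩
    · intro α _ α' _ h
      have h1 : g α = g α' := congrArg Prod.fst h
      have h2 : c α = c α' := congrArg Prod.snd h
      have := kergc (α * α'⁻¹) (by simp [h1]) (by simp [h2])
      exact mul_inv_eq_one.mp this
    · rintro ⟨β, n⟩ h
      obtain ⟨α, h1, h2⟩ := fsurj β n h
      exact ⟨α, Set.mem_univ _, by simp [h1, h2]⟩
  · refine ⟨fun q _ => (Hright q).symm, ?_, ?_⟩
    · intro q _ q' _ h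
      have h1 : f q = f q' := congrArg Prod.fst h
      have h2 : u q = u q' := congrArg Prod.snd h
      have := kerfu (q * q'⁻¹) (by simp [h1]) (by simp [h2])
      exact mul_inv_eq_one.mp this
    · rintro ⟨r, n⟩ h
      obtain ⟨q, h1, h2⟩ := rsurj r n h
      exact ⟨q, Set.mem_univ _, by simp [h1, h2]⟩
end

section
/- Let f : X → Y be a surjective group homomorphism admitting a homomorphic section s : Y → X with f ∘ s = id. Suppose there exist a group Z and a surjective homomorphism y : Z → Y such that, forming the pullback P = {(z, a) ∈ Z × X | y z = f a} with first projection φ : P → Z, the homomorphism φ is a trivial extension with respect to abelianization: the map P → {(z, c) ∈ Z × Abelianization P | η_Z z = (Abelianization.map φ) c}, p ↦ (φ p, η_P p), is a bijection, where η_G : G → Abelianization G denotes the canonical projection. Then f is itself a trivial extension: the map X → {(b, c) ∈ Y × Abelianization X | η_Y b = (Abelianization.map f) c}, a ↦ (f a, η_X a), is a bijection. -/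
/-- A homomorphism `g : A →* B` is a trivial extension (relative to abelianization) when
its naturality square with the abelianization units is a pullback, i.e.
`a ↦ (g a, η_A a)` is a bijection from `A` onto
`{(b, c) ∈ B × Abelianization A | η_B b = (Abelianization.map g) c}`. -/
def IsTrivialExt {A B : Type*} [Group A] [Group B] (g : A →* B) : Prop :=
  IsPB (⇑g) (⇑(Abelianization.of (G := A))) (⇑(Abelianization.of (G := B)))
    (⇑(Abelianization.map g))

open Subgroup
open scoped commutatorElement

section Commutator

variable {G : Type*} [Group G]

theorem commutatorElement_mul_left_of_mem_center {c : G} (hc : c ∈ center G) (u w : G) :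
    ⁅c * u, w⁆ = ⁅u, w⁆ :=
  calc ⁅c * u, w⁆ = c * (u * w * u⁻¹) * c⁻¹ * w⁻¹ := by group
    _ = u * w * u⁻¹ * c * c⁻¹ * w⁻¹ := by rw [← mem_center_iff.mp hc]
    _ = ⁅u, w⁆ := by group

theorem commutatorElement_mul_mul_of_mem_center {c d : G} (hc : c ∈ center G)
    (hd : d ∈ center G) (u v : G) : ⁅c * u, d * v⁆ = ⁅u, v⁆ := by
  rw [commutatorElement_mul_left_of_mem_center hc, ← commutatorElement_inv,
    commutatorElement_mul_left_of_mem_center hd, commutatorElement_inv]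

end Commutator

section Split

variable {X Y : Type*} [Group X] [Group Y] {f : X →* Y} {s : Y →* X}

theorem disjoint_ker_range_of_comp_eq_id (hs : f.comp s = MonoidHom.id Y) :
    Disjoint f.ker s.range := by
  rw [disjoint_def]
  rintro _ hker ⟨b, rfl⟩
  rw [MonoidHom.mem_ker, ← MonoidHom.comp_apply, hs, MonoidHom.id_apply] at hker
  rw [hker, map_one]

theorem commutator_le_range_of_ker_le_center (hs : f.comp s = MonoidHom.id Y)
    (hker : f.ker ≤ center X) : commutator X ≤ s.range := by
  have hcentral : ∀ a, a * (s (f a))⁻¹ ∈ center X := fun a => hker <| by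
    rw [MonoidHom.mem_ker, map_mul, map_inv, ← MonoidHom.comp_apply f s, hs,
      MonoidHom.id_apply, mul_inv_cancel]
  rw [commutator_def, commutator_le]
  intro a _ b _
  have hab : ⁅a, b⁆ = s ⁅f a, f b⁆ :=
    calc ⁅a, b⁆ = ⁅a * (s (f a))⁻¹ * s (f a), b * (s (f b))⁻¹ * s (f b)⁆ := by
          simp only [inv_mul_cancel_right]
      _ = s ⁅f a, f b⁆ := by
          rw [commutatorElement_mul_mul_of_mem_center (hcentral a) (hcentral b),
            map_commutatorElement]
  exact ⟨_, hab.symm⟩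

end Split

namespace IsTrivialExt

variable {A B : Type*} [Group A] [Group B] {g : A →* B}

theorem ker_le_center (hg : IsTrivialExt g) : g.ker ≤ center A := by
  refine fun k hk => mem_center_iff.mpr fun a => ?_
  have hcomm : ⁅k, a⁆ = 1 := by
    refine hg.injOn (Set.mem_univ _) (Set.mem_univ _) (Prod.ext ?_ ?_)
    · simp only [map_commutatorElement, MonoidHom.mem_ker.mp hk, map_one,
        commutatorElement_one_left]
    · simp only [map_commutatorElement, map_one, commutatorElement_eq_one_iff_mul_comm,
        mul_comm]
  exact (commutatorElement_eq_one_iff_mul_comm.mp hcomm).symm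

theorem of_comp_eq_id {s : B →* A} (hs : g.comp s = MonoidHom.id B)
    (hdisj : Disjoint g.ker (commutator A)) : IsTrivialExt g := by
  refine ⟨fun a _ => (Abelianization.map_of g a).symm, fun a₁ _ a₂ _ h => ?_, ?_⟩
  · have hg : g a₁ = g a₂ := congrArg Prod.fst h
    have hη : Abelianization.of a₁ = Abelianization.of a₂ := congrArg Prod.snd h
    have hker : a₁ * a₂⁻¹ ∈ g.ker := by
      rw [MonoidHom.mem_ker, map_mul, map_inv, hg, mul_inv_cancel]
    have hcomm : a₁ * a₂⁻¹ ∈ commutator A := by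
      rw [← Abelianization.ker_of, MonoidHom.mem_ker, map_mul, map_inv, hη, mul_inv_cancel]
    exact mul_inv_eq_one.mp (disjoint_def.mp hdisj hker hcomm)
  · rintro ⟨b, c⟩ (hbc : Abelianization.of b = Abelianization.map g c)
    obtain ⟨a, rfl⟩ : ∃ a, Abelianization.of a = c := QuotientGroup.mk_surjective c
    have hgs : ∀ b, g (s b) = b := fun b => DFunLike.congr_fun hs b
    refine ⟨a * s ((g a)⁻¹ * b), Set.mem_univ _, Prod.ext ?_ ?_⟩
    · simp only [map_mul, map_inv, hgs, mul_inv_cancel_left]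
    · have hdies : Abelianization.of ((g a)⁻¹ * b) = 1 := by
        rw [map_mul, map_inv, hbc, Abelianization.map_of, inv_mul_cancel]
      show Abelianization.of (a * s ((g a)⁻¹ * b)) = Abelianization.of a
      rw [map_mul, ← Abelianization.map_of s, hdies, map_one, mul_one]

end IsTrivialExt

namespace MonoidHom

variable {X Y Z : Type*} [Group X] [Group Y] [Group Z]

abbrev pullback (y : Z →* Y) (f : X →* Y) : Subgroup (Z × X) :=
  (y.comp (fst Z X)).eqLocus (f.comp (snd Z X))

abbrev pullbackFst (y : Z →* Y) (f : X →* Y) : y.pullback f →* Z :=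
  (fst Z X).comp (y.pullback f).subtype

theorem ker_le_center_of_ker_pullbackFst_le_center {y : Z →* Y} {f : X →* Y}
    (hy : Function.Surjective y) (h : (y.pullbackFst f).ker ≤ center _) :
    f.ker ≤ center X := by
  refine fun n hn => mem_center_iff.mpr fun a => ?_
  obtain ⟨z, hz⟩ := hy (f a)
  let p : y.pullback f := ⟨(z, a), hz⟩
  let q : y.pullback f := ⟨(1, n), (map_one y).trans (mem_ker.mp hn).symm⟩
  have hq : q ∈ (y.pullbackFst f).ker := rfl
  exact congrArg (fun r => (r.1 : Z × X).2) (mem_center_iff.mp (h hq) p)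

end MonoidHom

theorem stmt_10_general {X Y : Type*} [Group X] [Group Y] (f : X →* Y) (s : Y →* X)
    (hs : f.comp s = MonoidHom.id Y)
    (hcentral : ∃ (Z : Type*) (_ : Group Z) (y : Z →* Y), Function.Surjective y ∧
      IsTrivialExt ((MonoidHom.fst Z X).comp
        ((y.comp (MonoidHom.fst Z X)).eqLocus (f.comp (MonoidHom.snd Z X))).subtype)) :
    IsTrivialExt f := by
  obtain ⟨Z, _, y, hy, hpullback⟩ := hcentral
  have hker : f.ker ≤ center X :=
    MonoidHom.ker_le_center_of_ker_pullbackFst_le_center hy hpullback.ker_le_center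
  exact IsTrivialExt.of_comp_eq_id hs <| (disjoint_ker_range_of_comp_eq_id hs).mono_right
    (commutator_le_range_of_ker_le_center hs hker)

/-- Theorem 5.2 instantiated for groups and abelianization: a split surjective
homomorphism which becomes a trivial extension after pulling back along some surjection
(i.e. a split central extension) is itself a trivial extension. -/
theorem stmt_10 {X Y : Type*} [Group X] [Group Y] (f : X →* Y) (s : Y →* X)
    (hf : Function.Surjective f) (hs : f.comp s = MonoidHom.id Y)
    (hcentral : ∃ (Z : Type*) (_ : Group Z) (y : Z →* Y), Function.Surjective y ∧
      IsTrivialExt ((MonoidHom.fst Z X).comp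
        ((y.comp (MonoidHom.fst Z X)).eqLocus (f.comp (MonoidHom.snd Z X))).subtype)) :
    IsTrivialExt f :=
  stmt_10_general f s hs hcentral
end

section
/- Let f : X → Y be a surjective group homomorphism which is a central extension with respect to abelianization: there exist a group Z and a surjective homomorphism y : Z → Y such that the first projection φ : P → Z of the pullback P = {(z, a) ∈ Z × X | y z = f a} is a trivial extension. Then f is a normal extension: the first projection π₁ : Q → X of the kernel pair Q = {(a, a') ∈ X × X | f a = f a'} is a trivial extension, i.e. the map Q → {(a, c) ∈ X × Abelianization Q | η_X a = (Abelianization.map π₁) c}, q ↦ (π₁ q, η_Q q), is a bijection. -/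
private lemma of_eq_one_iff' {G : Type*} [Group G] (a : G) :
    Abelianization.of a = 1 ↔ a ∈ commutator G := by
  rw [← Abelianization.mk_eq_of]
  exact QuotientGroup.eq_one_iff a

private lemma of_surj' {G : Type*} [Group G] :
    Function.Surjective (Abelianization.of (G := G)) :=
  fun x => Quotient.exists_rep x

/-- From a trivial extension: kernel meets commutator trivially. -/
private lemma triv_inj {A B : Type*} [Group A] [Group B] {g : A →* B}
    (h : IsTrivialExt g) {a : A} (ha : a ∈ commutator A) (hga : g a = 1) : a = 1 := by
  refine h.injOn (Set.mem_univ a) (Set.mem_univ (1 : A)) ?_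
  have h1 : Abelianization.of a = 1 := (of_eq_one_iff' a).mpr ha
  simp [Prod.ext_iff, hga, h1]

/-- Converse: a surjection whose kernel meets the commutator trivially is a trivial
extension. -/
private lemma triv_of {A B : Type*} [Group A] [Group B] {g : A →* B}
    (hg : Function.Surjective g)
    (h : ∀ a ∈ commutator A, g a = 1 → a = 1) : IsTrivialExt g := by
  refine ⟨?_, ?_, ?_⟩
  · intro a _
    show Abelianization.of (g a) = Abelianization.map g (Abelianization.of a)
    rw [Abelianization.map_of]
  · intro a _ a' _ hee
    rw [Prod.ext_iff] at hee
    obtain ⟨h1, h2⟩ := hee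
    have hc : a * a'⁻¹ ∈ commutator A := by
      rw [← of_eq_one_iff']
      simp only [map_mul, map_inv]
      rw [show Abelianization.of a = Abelianization.of a' from h2]
      simp
    have hk : g (a * a'⁻¹) = 1 := by
      simp only [map_mul, map_inv]
      rw [show g a = g a' from h1]
      simp
    exact mul_inv_eq_one.mp (h _ hc hk)
  · rintro ⟨b, c⟩ hbc
    obtain ⟨a₀, ha₀⟩ := of_surj' (G := A) c
    have hb : Abelianization.of b = Abelianization.of (g a₀) := by
      have : Abelianization.of b = Abelianization.map g c := hbc
      rw [this, ← ha₀, Abelianization.map_of]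
    have hbc' : b * (g a₀)⁻¹ ∈ commutator B := by
      rw [← of_eq_one_iff']
      simp only [map_mul, map_inv, hb]
      simp
    have hmap : (commutator A).map g = commutator B := by
      rw [commutator_def, commutator_def, Subgroup.map_commutator,
        Subgroup.map_top_of_surjective g hg]
    obtain ⟨d, hd, hgd⟩ : b * (g a₀)⁻¹ ∈ (commutator A).map g := hmap ▸ hbc'
    refine ⟨d * a₀, Set.mem_univ _, ?_⟩
    have h1 : g (d * a₀) = b := by rw [map_mul, hgd]; group
    have h2 : Abelianization.of (d * a₀) = c := by
      rw [map_mul, (of_eq_one_iff' d).mpr hd, one_mul, ha₀]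
    simp [Prod.ext_iff, h1, h2]

/-- Corollary 5.3 instantiated for groups and abelianization: every central extension is
a normal extension, i.e. if some pullback of the surjection `f` along a surjection is a
trivial extension, then the first projection of the kernel pair of `f` is a trivial
extension. -/
theorem stmt_11 {X Y : Type*} [Group X] [Group Y] (f : X →* Y)
    (hf : Function.Surjective f)
    (hcentral : ∃ (Z : Type*) (_ : Group Z) (y : Z →* Y), Function.Surjective y ∧
      IsTrivialExt ((MonoidHom.fst Z X).comp
        ((y.comp (MonoidHom.fst Z X)).eqLocus (f.comp (MonoidHom.snd Z X))).subtype)) :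
    IsTrivialExt ((MonoidHom.fst X X).comp
      ((f.comp (MonoidHom.fst X X)).eqLocus (f.comp (MonoidHom.snd X X))).subtype) := by
  obtain ⟨Z, _, y, hy, htriv⟩ := hcentral
  set PZ := ((y.comp (MonoidHom.fst Z X)).eqLocus (f.comp (MonoidHom.snd Z X))) with hPZ
  set Q := ((f.comp (MonoidHom.fst X X)).eqLocus (f.comp (MonoidHom.snd X X))) with hQ
  -- the pullback projection
  set φ : ↥PZ →* Z := (MonoidHom.fst Z X).comp PZ.subtype with hφ
  have H : ∀ p ∈ commutator ↥PZ, ((p : Z × X)).1 = 1 → p = 1 := by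
    intro p hp hp1
    exact triv_inj htriv hp hp1
  apply triv_of
  · intro a
    exact ⟨⟨(a, a), rfl⟩, rfl⟩
  · intro q hq hq1
    -- the kernel pair of φ
    set R : Subgroup (↥PZ × ↥PZ) :=
      (φ.comp (MonoidHom.fst ↥PZ ↥PZ)).eqLocus (φ.comp (MonoidHom.snd ↥PZ ↥PZ)) with hR
    -- the comparison map ψ : R → Q
    have memQ : ∀ r : ↥R, ((((r : ↥PZ × ↥PZ).1 : Z × X).2, ((r : ↥PZ × ↥PZ).2 : Z × X).2) :
        X × X) ∈ Q := by
      intro r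
      have h1 : y ((r : ↥PZ × ↥PZ).1 : Z × X).1 = f ((r : ↥PZ × ↥PZ).1 : Z × X).2 :=
        (r : ↥PZ × ↥PZ).1.2
      have h2 : y ((r : ↥PZ × ↥PZ).2 : Z × X).1 = f ((r : ↥PZ × ↥PZ).2 : Z × X).2 :=
        (r : ↥PZ × ↥PZ).2.2
      have h3 : ((r : ↥PZ × ↥PZ).1 : Z × X).1 = ((r : ↥PZ × ↥PZ).2 : Z × X).1 := r.2
      show f ((r : ↥PZ × ↥PZ).1 : Z × X).2 = f ((r : ↥PZ × ↥PZ).2 : Z × X).2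
      rw [← h1, ← h2, h3]
    set ψ : ↥R →* ↥Q :=
      { toFun := fun r => ⟨_, memQ r⟩
        map_one' := rfl
        map_mul' := fun _ _ => rfl } with hψdef
    have hψ : Function.Surjective ψ := by
      rintro ⟨⟨a, a'⟩, hq'⟩
      obtain ⟨z, hz⟩ := hy (f a)
      have haa' : f a = f a' := hq'
      refine ⟨⟨(⟨(z, a), hz⟩, ⟨(z, a'), (by
        show y z = f a'
        rw [hz]; exact haa' : (z, a') ∈ PZ)⟩), rfl⟩, rfl⟩
    -- pull q back into the commutator of R
    have hmapR : (commutator ↥R).map ψ = commutator ↥Q := by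
      rw [commutator_def, commutator_def, Subgroup.map_commutator,
        Subgroup.map_top_of_surjective ψ hψ]
    obtain ⟨r, hr, hrq⟩ : q ∈ (commutator ↥R).map ψ := hmapR ▸ hq
    -- the two projections of r lie in the commutator of PZ
    have hproj : ∀ g : ↥R →* ↥PZ, g r ∈ commutator ↥PZ := by
      intro g
      have hle : (commutator ↥R).map g ≤ commutator ↥PZ := by
        rw [commutator_def, commutator_def, Subgroup.map_commutator]
        exact Subgroup.commutator_mono le_top le_top
      exact hle ⟨r, hr, rfl⟩
    set p : ↥PZ := ((MonoidHom.fst ↥PZ ↥PZ).comp R.subtype) r with hp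
    set p' : ↥PZ := ((MonoidHom.snd ↥PZ ↥PZ).comp R.subtype) r with hp'
    have hpc : p ∈ commutator ↥PZ := hproj _
    have hpc' : p' ∈ commutator ↥PZ := hproj _
    have hzeq : (p : Z × X).1 = (p' : Z × X).1 := r.2
    have hkey : p' * p⁻¹ = 1 := by
      refine H _ (mul_mem hpc' (inv_mem hpc)) ?_
      show (p' : Z × X).1 * ((p : Z × X).1)⁻¹ = 1
      rw [hzeq]
      group
    have hpp' : p' = p := mul_inv_eq_one.mp hkey
    -- read off the coordinates of q
    have hq1' : (p : Z × X).2 = 1 := by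
      have : ((q : X × X)).1 = (p : Z × X).2 := by rw [← hrq]; rfl
      rw [← this]; exact hq1
    have hq2' : ((q : X × X)).2 = (p' : Z × X).2 := by rw [← hrq]; rfl
    have : (q : X × X) = 1 := by
      ext
      · have : ((q : X × X)).1 = (p : Z × X).2 := by rw [← hrq]; rfl
        rw [this, hq1']; rfl
      · rw [hq2', hpp', hq1']; rfl
    exact Subtype.ext this
end

section
/- Let U and V be abelian groups, w : U → V a surjective group homomorphism, B any group and m : B → V a group homomorphism; let A = {(b, u) ∈ B × U | m b = w u} be the pullback, with projections p₁ : A → B and p₂ : A → U. Since V is abelian, m factors uniquely through the abelianization as m̄ : Abelianization B → V with m̄ ∘ η_B = m, and since U is abelian, p₂ factors uniquely as p̄₂ : Abelianization A → U with p̄₂ ∘ η_A = p₂. Then the induced homomorphism Abelianization A → {(β, u) ∈ Abelianization B × U | m̄ β = w u}, given by c ↦ ((Abelianization.map p₁) c, p̄₂ c), is a bijection; that is, abelianization preserves the pullback of w along m. -/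
/-!
An element `c` of the pullback `A` that dies in both `Abelianization B` and `U` has first
coordinate in `[B, B]`. Since `w` is surjective, so is `p₁ : A → B`, hence `[B, B] = p₁ [A, A]`:
some `c' ∈ [A, A]` has `p₁ c' = p₁ c`, and `p₂ c' = 1 = p₂ c` because `U` is abelian.
As `(p₁, p₂)` is injective on `A`, `c = c' ∈ [A, A]`.
-/

open Function

theorem Subgroup.map_commutator_of_surjective {G H : Type*} [Group G] [Group H] {f : G →* H}
    (hf : Surjective f) : (_root_.commutator G).map f = _root_.commutator H := by
  rw [map_commutator_eq, MonoidHom.range_eq_top.mpr hf, _root_.commutator_def]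

namespace Abelianization

theorem injective_map_prod_lift {G H U : Type*} [Group G] [Group H] [CommGroup U]
    {f : G →* H} (hf : Surjective f) {g : G →* U} (hfg : Injective (f.prod g)) :
    Injective ((map f).prod (lift g)) := by
  refine (injective_iff_map_eq_one _).mpr fun c hc => ?_
  obtain ⟨a, rfl⟩ : ∃ a, of a = c := QuotientGroup.mk_surjective c
  obtain ⟨hfa, hga⟩ := Prod.mk_eq_one.mp hc
  rw [map_of, ← MonoidHom.mem_ker, ker_of, ← Subgroup.map_commutator_of_surjective hf] at hfa
  obtain ⟨k, hk, hfk⟩ := hfa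
  have hgk : g k = 1 := commutator_subset_ker g hk
  have hak : a = k := hfg (Prod.ext hfk.symm (hga.trans hgk.symm))
  rwa [← MonoidHom.mem_ker, ker_of, hak]

end Abelianization

theorem Subgroup.injective_fst_comp_subtype_prod_snd_comp_subtype {G H : Type*} [Group G]
    [Group H] (S : Subgroup (G × H)) :
    Injective (((MonoidHom.fst G H).comp S.subtype).prod ((MonoidHom.snd G H).comp S.subtype)) := by
  rw [MonoidHom.prod_unique]
  exact S.subtype_injective

theorem MonoidHom.surjective_fst_comp_eqLocus_subtype {B U V : Type*} [Group B] [Group U]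
    [Group V] (m : B →* V) {w : U →* V} (hw : Surjective w) :
    Surjective ((fst B U).comp ((m.comp (fst B U)).eqLocus (w.comp (snd B U))).subtype) := by
  intro b
  obtain ⟨u, hu⟩ := hw (m b)
  exact ⟨⟨(b, u), hu.symm⟩, rfl⟩

/-- Admissibility of abelian groups as a Birkhoff subcategory of groups (Remark 5.4):
abelianization preserves the pullback of a surjection `w : U →* V` of abelian groups
along an arbitrary homomorphism `m : B →* V`. Here the pullback is the subgroup
`A = {(b, u) ∈ B × U | m b = w u}` of `B × U`, with projections `p₁ : A →* B` and
`p₂ : A →* U`; `Abelianization.lift m` is the unique factorization `m̄` of `m` through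
`η_B` (as `V` is abelian), and `Abelianization.lift p₂` the unique factorization `p̄₂`
of `p₂` through `η_A` (as `U` is abelian). The claim is that the induced homomorphism
`c ↦ ((Abelianization.map p₁) c, p̄₂ c)` is a bijection from `Abelianization A` onto
`{(β, u) ∈ Abelianization B × U | m̄ β = w u}`. -/
theorem stmt_12 {U V B : Type*} [CommGroup U] [CommGroup V] [Group B]
    (w : U →* V) (hw : Function.Surjective w) (m : B →* V)
    (p₁ : ((m.comp (MonoidHom.fst B U)).eqLocus (w.comp (MonoidHom.snd B U))) →* B)
    (p₂ : ((m.comp (MonoidHom.fst B U)).eqLocus (w.comp (MonoidHom.snd B U))) →* U)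
    (hp₁ : p₁ = (MonoidHom.fst B U).comp
      ((m.comp (MonoidHom.fst B U)).eqLocus (w.comp (MonoidHom.snd B U))).subtype)
    (hp₂ : p₂ = (MonoidHom.snd B U).comp
      ((m.comp (MonoidHom.fst B U)).eqLocus (w.comp (MonoidHom.snd B U))).subtype) :
    Set.BijOn
      (fun c => ((Abelianization.map p₁ c, Abelianization.lift p₂ c) :
        Abelianization B × U))
      Set.univ
      {βu : Abelianization B × U | Abelianization.lift m βu.1 = w βu.2} := by
  subst hp₁ hp₂
  refine ⟨fun c _ => ?_, ?_, fun ⟨β, u⟩ hβu => ?_⟩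
  · obtain ⟨a, rfl⟩ : ∃ a, Abelianization.of a = c := QuotientGroup.mk_surjective c
    exact a.2
  · exact (Abelianization.injective_map_prod_lift (m.surjective_fst_comp_eqLocus_subtype hw)
      (Subgroup.injective_fst_comp_subtype_prod_snd_comp_subtype _)).injOn
  · obtain ⟨b, rfl⟩ : ∃ b, Abelianization.of b = β := QuotientGroup.mk_surjective β
    exact ⟨Abelianization.of ⟨(b, u), hβu⟩, trivial, rfl⟩
end

section
/- Let G be a group and let R, S, T be congruences on G (equivalence relations compatible with the group operation) with R ⊓ S ≤ T. If elements x, y, t, z of G satisfy R x y, T x y, S x t, S y z and R t z, then T t z. -/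
/-- The Shifting Lemma for congruences on a group (an instance of the paper's claim that
every regular Mal'tsev category is a Gumm category): given congruences `R, S, T` on `G`
with `R ⊓ S ≤ T`, if `R x y`, `T x y`, `S x t`, `S y z` and `R t z`, then `T t z`. -/
theorem stmt_13 {G : Type*} [Group G] (R S T : Con G) (hRS : R ⊓ S ≤ T)
    (x y t z : G) (hR : R x y) (hT : T x y) (hSxt : S x t) (hSyz : S y z)
    (hRtz : R t z) : T t z := by
  have h1 : T t (t * x⁻¹ * y) := by
    have : T (t * x⁻¹ * x) (t * x⁻¹ * y) := T.mul (T.refl _) hT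
    simpa using this
  have h2 : (R ⊓ S) (t * x⁻¹ * y) z := by
    constructor
    · have : R (t * x⁻¹ * y) (z * y⁻¹ * y) := R.mul (R.mul hRtz (R.inv hR)) (R.refl _)
      simpa using this
    · have : S (t * x⁻¹ * y) (x * x⁻¹ * z) := S.mul (S.mul (S.symm hSxt) (S.refl _)) hSyz
      simpa using this
  exact T.trans h1 (hRS h2)
end
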